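/- For all nonnegative integers n and \ell, and real number \alpha, the translated Dowling polynomials satisfy \widetilde{D}_{(\alpha)}(n+\ell; x) = \sum_{j=0}^{\ell} \sum_{k=0}^{n} \widetilde{W}_{(\alpha)}(\ell, j) \binom{n}{k} (j\alpha)^{n-k} \widetilde{D}_{(\alpha)}(k; x) x^j. -/
import Mathlib


/-- The translated Whitney numbers of the second kind, with recurrence factor `α*k`. -/
noncomputable def tWhitney (α : ℝ) : ℕ → ℕ → ℝ
  | 0, 0 => 1
  | 0, _ + 1 => 0
  | _ + 1, 0 => 0
  | n + 1, k + 1 => tWhitney α n k + α * (k + 1) * tWhitney α n (k + 1)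

/-- The translated Dowling polynomial: the sum over k ≤ n of `W̃_α(n,k) * x^k`. -/
noncomputable def tDowling (α : ℝ) (n : ℕ) (x : ℝ) : ℝ :=
  ∑ k ∈ Finset.range (n + 1), tWhitney α n k * x ^ k

namespace TDAux

/-- Extension of `tWhitney` to integer second argument, zero for negatives. -/
noncomputable def W (α : ℝ) (n : ℕ) (m : ℤ) : ℝ :=
  if 0 ≤ m then tWhitney α n m.toNat else 0

lemma tWhitney_eq_zero (α : ℝ) : ∀ n k, n < k → tWhitney α n k = 0 := by
  intro n
  induction n with
  | zero =>
    rintro (_ | k) h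
    · omega
    · rfl
  | succ n ih =>
    rintro (_ | k) h
    · omega
    · simp [tWhitney, ih k (by omega), ih (k + 1) (by omega)]

lemma W_nonneg_eq (α : ℝ) (n k : ℕ) : W α n (k : ℤ) = tWhitney α n k := by
  simp [W]

lemma W_neg (α : ℝ) (n : ℕ) {m : ℤ} (h : m < 0) : W α n m = 0 := by
  simp [W, not_le.2 h]

lemma W_zero (α : ℝ) (t : ℤ) : W α 0 t = if t = 0 then 1 else 0 := by
  rcases lt_trichotomy t 0 with h | h | h
  · rw [W_neg _ _ h, if_neg (by omega)]
  · subst h; simp [W, tWhitney]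
  · rw [if_neg (by omega)]
    obtain ⟨k, rfl⟩ : ∃ k : ℕ, t = (k : ℤ) + 1 := ⟨(t - 1).toNat, by omega⟩
    have h1 : ((k : ℤ) + 1).toNat = k + 1 := by omega
    simp [W, h1, tWhitney]

lemma W_rec (α : ℝ) (n : ℕ) (m : ℤ) :
    W α (n + 1) m = W α n (m - 1) + α * (m : ℝ) * W α n m := by
  rcases lt_trichotomy m 0 with h | h | h
  · rw [W_neg _ _ h, W_neg _ _ h, W_neg _ _ (by omega)]; ring
  · subst h
    rw [W_neg _ _ (by norm_num : (0 : ℤ) - 1 < 0)]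
    simp [W, tWhitney]
  · obtain ⟨k, rfl⟩ : ∃ k : ℕ, m = (k : ℤ) + 1 := ⟨(m - 1).toNat, by omega⟩
    have h1 : ((k : ℤ) + 1).toNat = k + 1 := by omega
    have h2 : ((k : ℤ) + 1 - 1).toNat = k := by omega
    rw [W, W, W, if_pos (by omega), if_pos (by omega), if_pos (by omega), h1, h2]
    show tWhitney α (n + 1) (k + 1) = _
    simp only [tWhitney]
    push_cast
    ring

lemma key (α : ℝ) (ℓ : ℕ) : ∀ (n : ℕ) (m : ℤ),
    W α (n + ℓ) m = ∑ j ∈ Finset.range (ℓ + 1), ∑ k ∈ Finset.range (n + 1),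
      tWhitney α ℓ j * (n.choose k : ℝ) * ((j : ℝ) * α) ^ (n - k) * W α k (m - j) := by
  intro n
  induction n with
  | zero =>
    intro m
    simp only [Nat.zero_add, Finset.range_one, Finset.sum_singleton, Nat.choose_self,
      Nat.cast_one, Nat.sub_zero, pow_zero, mul_one, one_mul, W_zero]
    by_cases hm : 0 ≤ m ∧ m ≤ (ℓ : ℤ)
    · obtain ⟨h0, h1⟩ := hm
      rw [Finset.sum_eq_single m.toNat]
      · rw [if_pos (by omega)]
        rw [W, if_pos h0]
        ring
      · intro j hj hne
        rw [if_neg (by omega), mul_zero]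
      · intro h
        exact absurd (Finset.mem_range.2 (by omega)) h
    · have hW : W α ℓ m = 0 := by
        rcases lt_or_ge m 0 with h | h
        · exact W_neg _ _ h
        · rw [W, if_pos h]
          exact tWhitney_eq_zero α ℓ m.toNat (by omega)
      rw [hW]
      refine (Finset.sum_eq_zero fun j hj => ?_).symm
      rw [if_neg (by rw [Finset.mem_range] at hj; omega), mul_zero]
  | succ n ih =>
    intro m
    have hrec : W α (n + 1 + ℓ) m = W α (n + ℓ) (m - 1) + α * (m : ℝ) * W α (n + ℓ) m := by
      rw [show n + 1 + ℓ = (n + ℓ) + 1 by omega]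
      exact W_rec α (n + ℓ) m
    rw [hrec, ih (m - 1), ih m, Finset.mul_sum, ← Finset.sum_add_distrib]
    refine (Finset.sum_congr rfl fun j hj => ?_).symm
    rw [Finset.mul_sum, ← Finset.sum_add_distrib]
    set A := tWhitney α ℓ j with hA
    set a := (j : ℝ) * α with ha
    set t := m - (j : ℤ) with ht
    -- RHS to prove equal: ∑ k ∈ range (n+2), A * C(n+1,k) * a^(n+1-k) * W α k t
    have e1 : ∑ k ∈ Finset.range (n + 1 + 1),
        A * ((n + 1).choose k : ℝ) * a ^ (n + 1 - k) * W α k t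
        = (∑ k ∈ Finset.range (n + 1 + 1), A * (n.choose k : ℝ) * a ^ (n + 1 - k) * W α k t)
          + ∑ k ∈ Finset.range (n + 1 + 1),
              (A * ((n + 1).choose k : ℝ) * a ^ (n + 1 - k) * W α k t
                - A * (n.choose k : ℝ) * a ^ (n + 1 - k) * W α k t) := by
      rw [← Finset.sum_add_distrib]
      exact Finset.sum_congr rfl fun k _ => by ring
    have e2 : ∑ k ∈ Finset.range (n + 1 + 1), A * (n.choose k : ℝ) * a ^ (n + 1 - k) * W α k t
        = ∑ k ∈ Finset.range (n + 1), a * (A * (n.choose k : ℝ) * a ^ (n - k) * W α k t) := by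
      rw [Finset.sum_range_succ, Nat.choose_succ_self]
      push_cast
      rw [mul_zero, zero_mul, zero_mul, add_zero]
      refine Finset.sum_congr rfl fun k hk => ?_
      rw [Finset.mem_range] at hk
      rw [show n + 1 - k = (n - k) + 1 by omega, pow_succ]
      ring
    have e3 : ∑ k ∈ Finset.range (n + 1 + 1),
        (A * ((n + 1).choose k : ℝ) * a ^ (n + 1 - k) * W α k t
          - A * (n.choose k : ℝ) * a ^ (n + 1 - k) * W α k t)
        = ∑ k ∈ Finset.range (n + 1),
            A * (n.choose k : ℝ) * a ^ (n - k) * (W α k (t - 1) + α * (t : ℝ) * W α k t) := by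
      rw [Finset.sum_range_succ']
      simp only [Nat.choose_zero_right, Nat.cast_one, sub_self, add_zero]
      refine Finset.sum_congr rfl fun k hk => ?_
      rw [← W_rec α k t]
      have hc : (((n + 1).choose (k + 1) : ℕ) : ℝ) = (n.choose k : ℝ) + (n.choose (k + 1) : ℝ) := by
        rw [Nat.choose_succ_succ]; push_cast; ring
      rw [Finset.mem_range] at hk
      rw [show n + 1 - (k + 1) = n - k by omega, hc]
      ring
    rw [e1, e2, e3, ← Finset.sum_add_distrib]
    refine Finset.sum_congr rfl fun k hk => ?_
    have htc : ((t : ℤ) : ℝ) = (m : ℝ) - (j : ℝ) := by rw [ht]; push_cast; ring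
    have ht1 : m - 1 - (j : ℤ) = t - 1 := by omega
    rw [ht1, htc, ha]
    ring

lemma shift_sum (α x : ℝ) {n ℓ j k : ℕ} (hj : j ≤ ℓ) (hk : k ≤ n) :
    ∑ m ∈ Finset.range (n + ℓ + 1), W α k ((m : ℤ) - j) * x ^ m
      = tDowling α k x * x ^ j := by
  have hjle : j ≤ n + ℓ + 1 := by omega
  rw [Finset.range_eq_Ico, ← Finset.sum_Ico_consecutive _ (Nat.zero_le j) hjle]
  have h1 : ∑ m ∈ Finset.Ico 0 j, W α k ((m : ℤ) - j) * x ^ m = 0 := by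
    refine Finset.sum_eq_zero fun m hm => ?_
    rw [Finset.mem_Ico] at hm
    rw [W_neg α k (by omega : ((m : ℤ) - j) < 0), zero_mul]
  rw [h1, zero_add, Finset.sum_Ico_eq_sum_range]
  have h2 : ∀ i, W α k (((j + i : ℕ) : ℤ) - j) * x ^ (j + i)
      = tWhitney α k i * x ^ i * x ^ j := by
    intro i
    rw [show ((j + i : ℕ) : ℤ) - j = (i : ℤ) by push_cast; ring, W_nonneg_eq,
      pow_add]
    ring
  simp only [h2]
  rw [tDowling, Finset.sum_mul]
  refine (Finset.sum_subset (Finset.range_subset_range.2 (by omega)) fun i _ hi => ?_).symm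
  rw [Finset.mem_range, not_lt] at hi
  rw [tWhitney_eq_zero α k i (by omega), zero_mul, zero_mul]

end TDAux

theorem tDowling_spivey (n ℓ : ℕ) (α x : ℝ) :
    tDowling α (n + ℓ) x =
      ∑ j ∈ Finset.range (ℓ + 1), ∑ k ∈ Finset.range (n + 1),
        tWhitney α ℓ j * (n.choose k : ℝ) * ((j : ℝ) * α) ^ (n - k) *
          tDowling α k x * x ^ j := by
  rw [tDowling]
  have h1 : ∀ m ∈ Finset.range (n + ℓ + 1),
      tWhitney α (n + ℓ) m * x ^ m
        = (∑ j ∈ Finset.range (ℓ + 1), ∑ k ∈ Finset.range (n + 1),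
            tWhitney α ℓ j * (n.choose k : ℝ) * ((j : ℝ) * α) ^ (n - k)
              * TDAux.W α k ((m : ℤ) - j)) * x ^ m := by
    intro m _
    rw [← TDAux.W_nonneg_eq, TDAux.key α ℓ n (m : ℤ)]
  rw [Finset.sum_congr rfl h1]
  simp only [Finset.sum_mul]
  rw [Finset.sum_comm]
  refine Finset.sum_congr rfl fun j hj => ?_
  rw [Finset.sum_comm]
  refine Finset.sum_congr rfl fun k hk => ?_
  rw [Finset.mem_range] at hj hk
  calc ∑ m ∈ Finset.range (n + ℓ + 1),
        tWhitney α ℓ j * (n.choose k : ℝ) * ((j : ℝ) * α) ^ (n - k)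
          * TDAux.W α k ((m : ℤ) - j) * x ^ m
      = tWhitney α ℓ j * (n.choose k : ℝ) * ((j : ℝ) * α) ^ (n - k)
          * ∑ m ∈ Finset.range (n + ℓ + 1), TDAux.W α k ((m : ℤ) - j) * x ^ m := by
        rw [Finset.mul_sum]
        exact Finset.sum_congr rfl fun m _ => by ring
    _ = tWhitney α ℓ j * (n.choose k : ℝ) * ((j : ℝ) * α) ^ (n - k)
          * (tDowling α k x * x ^ j) := by
        rw [TDAux.shift_sum α x (by omega) (by omega)]
    _ = tWhitney α ℓ j * (n.choose k : ℝ) * ((j : ℝ) * α) ^ (n - k)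
          * tDowling α k x * x ^ j := by ring
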